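/- arXiv:1410.1473 — 3 statements merged into one kernel-verified Lean document; each statement's English description precedes it below -/
import Mathlib

section
/- Let Ψ(s) = ∫₀ˢ Φ'(z)/z dz and σ = Φ' ∘ Ψ⁻¹. If 1 < a ≤ sΦ'(s)/Φ(s) ≤ b for all s > 0, then (a−1)·v ≤ σ(v) ≤ (b−1)·v for all v in the range of Ψ. -/
open MeasureTheory Set Filter Topology

/-- If `Ψ(s) = ∫₀ˢ Φ'(z)/z dz`, `σ ∘ Ψ = Φ'`, and
`1 < a ≤ s·Φ'(s)/Φ(s) ≤ b` for all `s > 0`, then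
`(a−1)·v ≤ σ(v) ≤ (b−1)·v` for all `v` in the range of `Ψ`. -/
theorem stmt1 (Φ Φ' Ψ σ : ℝ → ℝ) (a b : ℝ)
    (hΦpos : ∀ s > (0:ℝ), 0 < Φ s)
    (hderiv : ∀ s > (0:ℝ), HasDerivAt Φ (Φ' s) s)
    (hΦ'pos : ∀ s > (0:ℝ), 0 < Φ' s)
    (ha : 1 < a) (hab : a ≤ b)
    (hstruct : ∀ s > (0:ℝ), a * Φ s ≤ s * Φ' s ∧ s * Φ' s ≤ b * Φ s)
    (hint : ∀ s > (0:ℝ), MeasureTheory.IntegrableOn (fun z => Φ' z / z) (Set.Ioo 0 s))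
    (hΨ : ∀ s > (0:ℝ), Ψ s = ∫ z in Set.Ioo (0:ℝ) s, Φ' z / z)
    (hσ : ∀ s > (0:ℝ), σ (Ψ s) = Φ' s) :
    ∀ s > (0:ℝ), (a - 1) * Ψ s ≤ σ (Ψ s) ∧ σ (Ψ s) ≤ (b - 1) * Ψ s := by
  have ha0 : (0:ℝ) < a := lt_trans one_pos ha
  have hb1 : (1:ℝ) < b := lt_of_lt_of_le ha hab
  have hb0 : (0:ℝ) < b := lt_trans one_pos hb1
  set f : ℝ → ℝ := fun z => Φ' z / z with hfdef
  -- interval integrability of f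
  have hII : ∀ t > (0:ℝ), IntervalIntegrable f volume 0 t := by
    intro t ht
    rw [intervalIntegrable_iff_integrableOn_Ioc_of_le ht.le,
      integrableOn_Ioc_iff_integrableOn_Ioo]
    exact hint t ht
  have hΨint : ∀ t > (0:ℝ), Ψ t = ∫ z in (0:ℝ)..t, f z := by
    intro t ht
    rw [hΨ t ht, intervalIntegral.integral_of_le ht.le,
      MeasureTheory.integral_Ioc_eq_integral_Ioo]
  have hΨnonneg : ∀ t > (0:ℝ), 0 ≤ Ψ t := by
    intro t ht
    rw [hΨ t ht]
    apply MeasureTheory.setIntegral_nonneg measurableSet_Ioo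
    intro z hz
    exact div_nonneg (hΦ'pos z hz.1).le hz.1.le
  -- FTC for Φ(z)/z
  have hFTC : ∀ ε s : ℝ, 0 < ε → ε ≤ s →
      (∫ z in ε..s, (f z - Φ z / z ^ 2)) = Φ s / s - Φ ε / ε := by
    intro ε s hε hεs
    have hs : (0:ℝ) < s := lt_of_lt_of_le hε hεs
    have huIcc : Set.uIcc ε s = Set.Icc ε s := Set.uIcc_of_le hεs
    have hder : ∀ z ∈ Set.uIcc ε s,
        HasDerivAt (fun z => Φ z / z) (f z - Φ z / z ^ 2) z := by
      intro z hz
      rw [huIcc] at hz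
      have hz0 : (0:ℝ) < z := lt_of_lt_of_le hε hz.1
      have hd := (hderiv z hz0).div (hasDerivAt_id z) hz0.ne'
      have e : Φ' z / z - Φ z / z ^ 2 = (Φ' z * z - Φ z * 1) / z ^ 2 := by
        rw [eq_div_iff (pow_ne_zero 2 hz0.ne')]
        field_simp
      show HasDerivAt (fun z => Φ z / z) (Φ' z / z - Φ z / z ^ 2) z
      rw [e]
      exact hd
    have hint1 : IntervalIntegrable f volume ε s := by
      apply (hII (s+1) (by linarith)).mono_set
      rw [huIcc, Set.uIcc_of_le (by linarith : (0:ℝ) ≤ s + 1)]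
      exact Set.Icc_subset_Icc hε.le (by linarith)
    have hint2 : IntervalIntegrable (fun z => Φ z / z ^ 2) volume ε s := by
      apply ContinuousOn.intervalIntegrable
      intro z hz
      rw [huIcc] at hz
      have hz0 : (0:ℝ) < z := lt_of_lt_of_le hε hz.1
      exact ((hderiv z hz0).continuousAt.continuousWithinAt.div
        ((continuous_pow 2).continuousAt.continuousWithinAt) (by positivity))
    exact intervalIntegral.integral_eq_sub_of_hasDerivAt hder (hint1.sub hint2)
  -- core double inequality
  have hcore : ∀ ε s : ℝ, 0 < ε → ε ≤ s →
      (1 - 1/a) * (Ψ s - Ψ ε) ≤ Φ s / s - Φ ε / ε ∧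
      Φ s / s - Φ ε / ε ≤ (1 - 1/b) * (Ψ s - Ψ ε) := by
    intro ε s hε hεs
    have hs : (0:ℝ) < s := lt_of_lt_of_le hε hεs
    have hdiff : Ψ s - Ψ ε = ∫ z in ε..s, f z := by
      rw [hΨint s hs, hΨint ε hε,
        intervalIntegral.integral_interval_sub_left (hII s hs) (hII ε hε)]
    have hint1 : IntervalIntegrable f volume ε s := by
      apply (hII (s+1) (by linarith)).mono_set
      rw [Set.uIcc_of_le hεs, Set.uIcc_of_le (by linarith : (0:ℝ) ≤ s + 1)]
      exact Set.Icc_subset_Icc hε.le (by linarith)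
    have hint2 : IntervalIntegrable (fun z => f z - Φ z / z ^ 2) volume ε s := by
      refine hint1.sub (ContinuousOn.intervalIntegrable ?_)
      intro z hz
      rw [Set.uIcc_of_le hεs] at hz
      have hz0 : (0:ℝ) < z := lt_of_lt_of_le hε hz.1
      exact ((hderiv z hz0).continuousAt.continuousWithinAt.div
        ((continuous_pow 2).continuousAt.continuousWithinAt) (by positivity))
    constructor
    · rw [hdiff, ← hFTC ε s hε hεs, ← intervalIntegral.integral_const_mul]
      apply intervalIntegral.integral_mono_on hεs (hint1.const_mul _) hint2
      intro z hz
      have hz0 : (0:ℝ) < z := lt_of_lt_of_le hε hz.1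
      have h1 : a * Φ z ≤ z * Φ' z := (hstruct z hz0).1
      have e : f z - Φ z / z ^ 2 - (1 - 1/a) * f z = (z * Φ' z - a * Φ z) / (a * z ^ 2) := by
        show Φ' z / z - Φ z / z ^ 2 - (1 - 1/a) * (Φ' z / z) = _
        field_simp
        ring
      have hnn : 0 ≤ (z * Φ' z - a * Φ z) / (a * z ^ 2) :=
        div_nonneg (by linarith) (by positivity)
      linarith
    · rw [hdiff, ← hFTC ε s hε hεs, ← intervalIntegral.integral_const_mul]
      apply intervalIntegral.integral_mono_on hεs hint2 (hint1.const_mul _)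
      intro z hz
      have hz0 : (0:ℝ) < z := lt_of_lt_of_le hε hz.1
      have h1 : z * Φ' z ≤ b * Φ z := (hstruct z hz0).2
      have e : (1 - 1/b) * f z - (f z - Φ z / z ^ 2) = (b * Φ z - z * Φ' z) / (b * z ^ 2) := by
        show (1 - 1/b) * (Φ' z / z) - (Φ' z / z - Φ z / z ^ 2) = _
        field_simp
        ring
      have hnn : 0 ≤ (b * Φ z - z * Φ' z) / (b * z ^ 2) :=
        div_nonneg (by linarith) (by positivity)
      linarith
  -- monotonicity of Φ(z) z^(-a)
  have hmono : ∀ ε s : ℝ, 0 < ε → ε ≤ s → Φ ε * ε ^ (-a) ≤ Φ s * s ^ (-a) := by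
    intro ε s hε hεs
    have H : ∀ z ∈ Set.Icc ε s, HasDerivAt (fun z => Φ z * z ^ (-a))
        (Φ' z * z ^ (-a) + Φ z * (-a * z ^ (-a - 1))) z := by
      intro z hz
      have hz0 : (0:ℝ) < z := lt_of_lt_of_le hε hz.1
      exact (hderiv z hz0).mul (Real.hasDerivAt_rpow_const (Or.inl hz0.ne'))
    have hm : MonotoneOn (fun z => Φ z * z ^ (-a)) (Set.Icc ε s) := by
      apply monotoneOn_of_deriv_nonneg (convex_Icc ε s)
      · exact fun z hz => (H z hz).continuousAt.continuousWithinAt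
      · intro z hz
        rw [interior_Icc] at hz
        exact (H z (Set.Ioo_subset_Icc_self hz)).differentiableAt.differentiableWithinAt
      · intro z hz
        rw [interior_Icc] at hz
        have hz0 : (0:ℝ) < z := lt_of_lt_of_le hε hz.1.le
        rw [(H z (Set.Ioo_subset_Icc_self hz)).deriv]
        have h1 : a * Φ z ≤ z * Φ' z := (hstruct z hz0).1
        have e1 : z ^ (-a) = z ^ (-a - 1) * z := by
          rw [← Real.rpow_add_one hz0.ne' (-a - 1)]
          congr 1
          ring
        have hp : (0:ℝ) < z ^ (-a - 1) := Real.rpow_pos_of_pos hz0 _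
        have hkey : 0 ≤ z ^ (-a - 1) * (z * Φ' z - a * Φ z) :=
          mul_nonneg hp.le (by linarith)
        have e2 : Φ' z * (z ^ (-a - 1) * z) + Φ z * (-a * z ^ (-a - 1)) =
            z ^ (-a - 1) * (z * Φ' z - a * Φ z) := by ring
        rw [e1, e2]
        exact hkey
    exact hm ⟨le_refl ε, hεs⟩ ⟨hεs, le_refl s⟩ hεs
  -- Φ(ε)/ε → 0 as ε → 0⁺
  have hΦ0 : Tendsto (fun ε => Φ ε / ε) (𝓝[>] (0:ℝ)) (𝓝 0) := by
    have hC : ∀ ε : ℝ, 0 < ε → ε ≤ 1 → Φ ε / ε ≤ (Φ 1 * (1:ℝ) ^ (-a)) * ε ^ (a - 1) := by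
      intro ε hε hε1
      have key := hmono ε 1 hε hε1
      have e : Φ ε / ε = (Φ ε * ε ^ (-a)) * ε ^ (a - 1) := by
        rw [mul_assoc, ← Real.rpow_add hε, show -a + (a - 1) = (-1:ℝ) by ring,
          Real.rpow_neg_one, div_eq_mul_inv]
      rw [e]
      exact mul_le_mul_of_nonneg_right key (Real.rpow_nonneg hε.le _)
    have htend : Tendsto (fun ε : ℝ => (Φ 1 * (1:ℝ) ^ (-a)) * ε ^ (a - 1)) (𝓝[>] (0:ℝ)) (𝓝 0) := by
      have h1 : Tendsto (fun ε : ℝ => ε ^ (a - 1)) (𝓝 (0:ℝ)) (𝓝 0) := by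
        have := (Real.continuousAt_rpow_const 0 (a - 1) (Or.inr (by linarith))).tendsto
        rwa [Real.zero_rpow (by linarith : a - 1 ≠ 0)] at this
      have h2 : Tendsto (fun ε : ℝ => (Φ 1 * (1:ℝ) ^ (-a)) * ε ^ (a - 1)) (𝓝[>] (0:ℝ))
          (𝓝 ((Φ 1 * (1:ℝ) ^ (-a)) * 0)) :=
        Filter.Tendsto.mono_left (h1.const_mul _) nhdsWithin_le_nhds
      simpa using h2
    apply tendsto_of_tendsto_of_tendsto_of_le_of_le' tendsto_const_nhds htend
    · filter_upwards [self_mem_nhdsWithin] with ε hε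
      exact div_nonneg (hΦpos ε hε).le (le_of_lt hε)
    · filter_upwards [Ioc_mem_nhdsGT one_pos] with ε hε
      exact hC ε hε.1 hε.2
  -- upper bound: Φ s / s ≤ (1 - 1/b) * Ψ s
  have hUpper : ∀ s > (0:ℝ), Φ s / s ≤ (1 - 1/b) * Ψ s := by
    intro s hs
    have hev : ∀ᶠ ε in 𝓝[>] (0:ℝ), Φ s / s ≤ (1 - 1/b) * Ψ s + Φ ε / ε := by
      filter_upwards [Ioc_mem_nhdsGT hs] with ε hε
      have h := (hcore ε s hε.1 hε.2).2
      have hψε := hΨnonneg ε hε.1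
      have hc : (0:ℝ) ≤ 1 - 1/b := by
        rw [sub_nonneg]
        exact (div_le_one hb0).mpr hb1.le
      nlinarith
    have htend : Tendsto (fun ε => (1 - 1/b) * Ψ s + Φ ε / ε) (𝓝[>] (0:ℝ))
        (𝓝 ((1 - 1/b) * Ψ s)) := by
      simpa using (tendsto_const_nhds.add hΦ0)
    exact ge_of_tendsto htend hev
  -- Ψ(s/(n+1)) → 0
  have hΨ0seq : ∀ s > (0:ℝ), Tendsto (fun n : ℕ => Ψ (s / (n + 1))) atTop (𝓝 0) := by
    intro s hs
    set v : ℕ → ℝ := fun n => s / (n + 1) with hv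
    have hvpos : ∀ n, 0 < v n := fun n => by positivity
    have hvle : ∀ n, v n ≤ s := fun n => by
      rw [hv]
      rw [div_le_iff₀ (by positivity)]
      nlinarith [hs, Nat.cast_nonneg (α := ℝ) n]
    have hmonoS : Monotone (fun n : ℕ => Set.Ioc (v n) s) := by
      intro n m hnm
      apply Set.Ioc_subset_Ioc_left
      apply div_le_div_of_nonneg_left hs.le (by positivity)
      have : (n:ℝ) ≤ m := Nat.cast_le.mpr hnm
      linarith
    have hUnion : (⋃ n, Set.Ioc (v n) s) = Set.Ioc 0 s := by
      apply Set.Subset.antisymm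
      · exact Set.iUnion_subset fun n => Set.Ioc_subset_Ioc_left (hvpos n).le
      · intro x hx
        obtain ⟨n, hn⟩ := exists_nat_gt (s / x)
        refine Set.mem_iUnion.mpr ⟨n, ?_, hx.2⟩
        rw [hv]
        rw [div_lt_iff₀ (by positivity)]
        rw [div_lt_iff₀ hx.1] at hn
        nlinarith
    have hintIoc : IntegrableOn f (Set.Ioc 0 s) := by
      rw [integrableOn_Ioc_iff_integrableOn_Ioo]
      exact hint s hs
    have htend : Tendsto (fun n : ℕ => ∫ z in Set.Ioc (v n) s, f z) atTop (𝓝 (Ψ s)) := by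
      have := MeasureTheory.tendsto_setIntegral_of_monotone
        (fun n : ℕ => measurableSet_Ioc) hmonoS (by rw [hUnion]; exact hintIoc)
      rw [hUnion] at this
      rw [hΨ s hs, ← MeasureTheory.integral_Ioc_eq_integral_Ioo] at *
      exact this
    have hΨv : ∀ n, Ψ (v n) = Ψ s - ∫ z in Set.Ioc (v n) s, f z := by
      intro n
      have : Ψ s - Ψ (v n) = ∫ z in (v n)..s, f z := by
        rw [hΨint s hs, hΨint (v n) (hvpos n),
          intervalIntegral.integral_interval_sub_left (hII s hs) (hII (v n) (hvpos n))]
      rw [intervalIntegral.integral_of_le (hvle n)] at this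
      linarith
    have : Tendsto (fun n : ℕ => Ψ s - ∫ z in Set.Ioc (v n) s, f z) atTop (𝓝 (Ψ s - Ψ s)) :=
      tendsto_const_nhds.sub htend
    rw [sub_self] at this
    exact this.congr fun n => (hΨv n).symm
  -- lower bound: (1 - 1/a) * Ψ s ≤ Φ s / s
  have hLower : ∀ s > (0:ℝ), (1 - 1/a) * Ψ s ≤ Φ s / s := by
    intro s hs
    have hev : ∀ n : ℕ, (1 - 1/a) * Ψ s ≤ Φ s / s + (1 - 1/a) * Ψ (s / (n + 1)) := by
      intro n
      have hvpos : (0:ℝ) < s / (n + 1) := by positivity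
      have hvle : s / (n + 1) ≤ s := by
        rw [div_le_iff₀ (by positivity)]
        nlinarith [hs, Nat.cast_nonneg (α := ℝ) n]
      have h := (hcore (s / (n + 1)) s hvpos hvle).1
      have hφε : 0 ≤ Φ (s / (n + 1)) / (s / (n + 1)) :=
        div_nonneg (hΦpos _ hvpos).le hvpos.le
      nlinarith
    have htend : Tendsto (fun n : ℕ => Φ s / s + (1 - 1/a) * Ψ (s / (n + 1))) atTop
        (𝓝 (Φ s / s)) := by
      have h2 : Tendsto (fun n : ℕ => Φ s / s + (1 - 1/a) * Ψ (s / (n + 1))) atTop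
          (𝓝 (Φ s / s + (1 - 1/a) * 0)) :=
        Filter.Tendsto.add tendsto_const_nhds ((hΨ0seq s hs).const_mul (1 - 1/a))
      simpa using h2
    exact ge_of_tendsto htend (Filter.Eventually.of_forall hev)
  -- conclusion
  intro s hs
  rw [hσ s hs]
  have h1 := hLower s hs
  have h2 := hUpper s hs
  have hst := hstruct s hs
  constructor
  · have e : (a - 1) * Ψ s = a * ((1 - 1/a) * Ψ s) := by
      field_simp
    rw [e]
    have : a * ((1 - 1/a) * Ψ s) ≤ a * (Φ s / s) :=
      mul_le_mul_of_nonneg_left h1 ha0.le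
    have h3 : a * (Φ s / s) ≤ Φ' s := by
      rw [← mul_div_assoc, div_le_iff₀ hs]
      nlinarith [hst.1]
    linarith
  · have h3 : Φ' s ≤ b * (Φ s / s) := by
      rw [← mul_div_assoc, le_div_iff₀ hs]
      nlinarith [hst.2]
    have : b * (Φ s / s) ≤ b * ((1 - 1/b) * Ψ s) :=
      mul_le_mul_of_nonneg_left h2 hb0.le
    have e : b * ((1 - 1/b) * Ψ s) = (b - 1) * Ψ s := by
      field_simp
    linarith
end

section
/- Let ζ* : [0,T] → ℝ be nondecreasing and Lipschitz, differentiable at t₀ ∈ (0,T) with (ζ*)'(t₀) > 0. Suppose v* : ℝ × [0,T] → ℝ is continuous and for all small η, δ > 0: ∫_{t₀}^{t₀+η} v*(ζ*(s)−δ, s) ds ≥ δ(ζ*(t₀+η)−ζ*(t₀)) − δ²·η·z̲(t₀) for a fixed constant z̲(t₀) ≤ 0. Then there exist δ₀ > 0 and c > 0 such that v*(ζ*(t₀)−δ, t₀) ≥ cδ for all δ ∈ [0, δ₀]. -/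
/-- Linear growth of the pressure behind a moving interface: if `ζ*` is
nondecreasing, Lipschitz, differentiable at `t₀` with positive speed, and
the integrated estimate holds for all small `η, δ > 0`, then
`v*(ζ*(t₀)−δ, t₀) ≥ cδ` for some `c > 0` and all small `δ ≥ 0`. -/
theorem stmt16 (T t₀ zb ζ' η₀ δ₁ : ℝ) (L : NNReal) (ζ : ℝ → ℝ) (v : ℝ → ℝ → ℝ)
    (hT : 0 < T) (ht₀ : t₀ ∈ Set.Ioo 0 T)
    (hmono : MonotoneOn ζ (Set.Icc 0 T))
    (hlip : LipschitzOnWith L ζ (Set.Icc 0 T))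
    (hder : HasDerivAt ζ ζ' t₀) (hζ' : 0 < ζ')
    (hv : Continuous fun p : ℝ × ℝ => v p.1 p.2)
    (hzb : zb ≤ 0) (hη₀ : 0 < η₀) (hδ₁ : 0 < δ₁)
    (hint : ∀ η δ : ℝ, 0 < η → η < η₀ → 0 < δ → δ < δ₁ → t₀ + η ≤ T →
      δ * (ζ (t₀ + η) - ζ t₀) - δ ^ 2 * η * zb ≤
        ∫ s in t₀..(t₀ + η), v (ζ s - δ) s) :
    ∃ δ₀ > (0:ℝ), ∃ c > (0:ℝ), ∀ δ : ℝ, 0 ≤ δ → δ ≤ δ₀ →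
      c * δ ≤ v (ζ t₀ - δ) t₀ := by
  obtain ⟨ht₀0, ht₀T⟩ := ht₀
  -- continuous extension of ζ
  set ζt : ℝ → ℝ := fun s => ζ (max 0 (min s T)) with hζt_def
  have hζt : Continuous ζt := by
    apply hlip.continuousOn.comp_continuous
    · exact continuous_const.max (continuous_id.min continuous_const)
    · intro x
      exact ⟨le_max_left _ _, max_le hT.le (min_le_right x T)⟩
  have hζteq : ∀ s ∈ Set.Icc (0:ℝ) T, ζt s = ζ s := by
    intro s hs
    simp only [hζt_def]
    rw [min_eq_left hs.2, max_eq_right hs.1]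
  have ht₀mem : t₀ ∈ Set.Icc (0:ℝ) T := ⟨ht₀0.le, ht₀T.le⟩
  -- key pointwise bound for positive δ
  have key : ∀ δ : ℝ, 0 < δ → δ < δ₁ → ζ' * δ ≤ v (ζ t₀ - δ) t₀ := by
    intro δ hδ hδ₁'
    set f : ℝ → ℝ := fun s => v (ζt s - δ) s with hf_def
    have hfc : Continuous f :=
      hv.comp ((hζt.sub continuous_const).prodMk continuous_id)
    set F : ℝ → ℝ := fun u => ∫ s in t₀..u, f s with hF_def
    have hF : HasDerivAt F (f t₀) t₀ := by
      exact intervalIntegral.integral_hasDerivAt_right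
        (hfc.intervalIntegrable t₀ t₀)
        hfc.stronglyMeasurable.stronglyMeasurableAtFilter
        hfc.continuousAt
    have hFt : Filter.Tendsto (fun u => (F u - F t₀) / (u - t₀))
        (nhdsWithin t₀ (Set.Ioi t₀)) (nhds (f t₀)) := by
      have := hasDerivAt_iff_tendsto_slope.mp hF
      have h2 := this.mono_left (nhdsWithin_mono t₀ (by
        intro x hx
        exact ne_of_gt hx : Set.Ioi t₀ ⊆ {t₀}ᶜ))
      refine h2.congr (fun u => ?_)
      simp [slope_def_field, div_eq_inv_mul]
    have hζslope : Filter.Tendsto (fun u => (ζ u - ζ t₀) / (u - t₀))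
        (nhdsWithin t₀ (Set.Ioi t₀)) (nhds ζ') := by
      have := hasDerivAt_iff_tendsto_slope.mp hder
      have h2 := this.mono_left (nhdsWithin_mono t₀ (by
        intro x hx
        exact ne_of_gt hx : Set.Ioi t₀ ⊆ {t₀}ᶜ))
      refine h2.congr (fun u => ?_)
      simp [slope_def_field, div_eq_inv_mul]
    have hA : Filter.Tendsto (fun u => δ * ((ζ u - ζ t₀) / (u - t₀)) - δ ^ 2 * zb)
        (nhdsWithin t₀ (Set.Ioi t₀)) (nhds (δ * ζ' - δ ^ 2 * zb)) :=
      ((hζslope.const_mul δ).sub tendsto_const_nhds)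
    have hev : ∀ᶠ u in nhdsWithin t₀ (Set.Ioi t₀),
        δ * ((ζ u - ζ t₀) / (u - t₀)) - δ ^ 2 * zb ≤ (F u - F t₀) / (u - t₀) := by
      have hmem : Set.Ioo t₀ (t₀ + min η₀ (T - t₀)) ∈ nhdsWithin t₀ (Set.Ioi t₀) :=
        Ioo_mem_nhdsGT_of_mem ⟨le_refl _, by
          have : 0 < min η₀ (T - t₀) := lt_min hη₀ (by linarith)
          linarith⟩
      filter_upwards [hmem] with u hu
      have hη : 0 < u - t₀ := by linarith [hu.1]
      have hηη₀ : u - t₀ < η₀ := by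
        have := hu.2
        have h1 : min η₀ (T - t₀) ≤ η₀ := min_le_left _ _
        linarith
      have huT : u ≤ T := by
        have := hu.2
        have h1 : min η₀ (T - t₀) ≤ T - t₀ := min_le_right _ _
        linarith
      have hintu := hint (u - t₀) δ hη hηη₀ hδ hδ₁' (by linarith)
      rw [show t₀ + (u - t₀) = u by ring] at hintu
      have hFeq : ∫ s in t₀..u, v (ζ s - δ) s = F u := by
        apply intervalIntegral.integral_congr
        intro s hs
        rw [Set.uIcc_of_le (by linarith : t₀ ≤ u)] at hs
        simp only [hf_def]
        rw [hζteq s ⟨by linarith [hs.1], le_trans hs.2 huT⟩]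
      rw [hFeq] at hintu
      have hFt₀ : F t₀ = 0 := intervalIntegral.integral_same
      rw [hFt₀, sub_zero]
      calc δ * ((ζ u - ζ t₀) / (u - t₀)) - δ ^ 2 * zb
          = (δ * (ζ u - ζ t₀) - δ ^ 2 * (u - t₀) * zb) / (u - t₀) := by
            field_simp
        _ ≤ F u / (u - t₀) := by gcongr
    have hle : δ * ζ' - δ ^ 2 * zb ≤ f t₀ :=
      le_of_tendsto_of_tendsto hA hFt hev
    have : f t₀ = v (ζ t₀ - δ) t₀ := by
      simp only [hf_def, hζteq t₀ ht₀mem]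
    rw [this] at hle
    nlinarith [sq_nonneg δ]
  refine ⟨δ₁ / 2, by linarith, ζ', hζ', fun δ hδ0 hδhalf => ?_⟩
  rcases eq_or_lt_of_le hδ0 with h0 | hpos
  · -- δ = 0
    subst h0
    simp only [mul_zero]
    have hcont : Filter.Tendsto (fun d : ℝ => v (ζ t₀ - d) t₀)
        (nhdsWithin 0 (Set.Ioi 0)) (nhds (v (ζ t₀ - 0) t₀)) := by
      have : Continuous fun d : ℝ => v (ζ t₀ - d) t₀ :=
        hv.comp ((continuous_const.sub continuous_id).prodMk continuous_const)
      exact (this.tendsto 0).mono_left nhdsWithin_le_nhds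
    refine ge_of_tendsto hcont ?_
    filter_upwards [Ioo_mem_nhdsGT_of_mem
      (⟨le_refl (0:ℝ), hδ₁⟩ : (0:ℝ) ∈ Set.Ico 0 δ₁)] with d hd
    have := key d hd.1 hd.2
    nlinarith [hd.1, hζ'.le]
  · exact key δ hpos (by linarith)
end

section
/- Let v, v*, ζ, ζ* satisfy: ζ, ζ* : [0,T] → ℝ are continuous nondecreasing with ζ*(0) = ζ(0), ζ ≤ ζ* on [0,T], v(x,t) = 0 for x ≥ ζ(t), and whenever ζ* is differentiable at t₀ with (ζ*)'(t₀) > 0 there exists δ₀, c > 0 with v(ζ*(t₀)−δ, t₀) ≥ cδ for δ ∈ [0,δ₀], where ζ(t) = sup{x : v(x,t) > 0}. Assume also ζ* is Lipschitz (hence differentiable a.e.). Then ζ* = ζ on [0,T]. -/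
/-!
If `ζs t₁ > ζ t₁`, go back to the last time `s < t₁` at which `ζs` touched `ζ`. Then
`ζs s = ζ s ≤ ζ t₁ < ζs t₁`, and since a Lipschitz function is absolutely continuous, the
fundamental theorem of calculus yields a time `t₀ ∈ (s, t₁)` where `ζs` has positive derivative.
The growth hypothesis then makes `v` positive just behind `ζs t₀`, yet that point still lies in
the gap `[ζ t₀, ζs t₀)`, where `v` vanishes.
-/

open Set

theorem AbsolutelyContinuousOnInterval.exists_hasDerivAt_pos {f : ℝ → ℝ} {a b : ℝ}
    (hf : AbsolutelyContinuousOnInterval f a b) (hab : a ≤ b) (hfab : f a < f b) :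
    ∃ t ∈ Ioo a b, ∃ d > 0, HasDerivAt f d t := by
  by_contra! h
  have hderiv : ∀ t ∈ Ioo a b, deriv f t ≤ 0 := fun t ht => by
    by_contra! hpos
    exact h t ht _ hpos (differentiableAt_of_deriv_ne_zero hpos.ne').hasDerivAt
  have hint : ∫ x in a..b, deriv f x ≤ ∫ _ in a..b, (0 : ℝ) :=
    intervalIntegral.integral_mono_on_of_le_Ioo hab hf.intervalIntegrable_deriv
      intervalIntegrable_const hderiv
  rw [hf.integral_deriv_eq_sub, intervalIntegral.integral_zero] at hint
  linarith

theorem ContinuousOn.exists_last_nonpos {g : ℝ → ℝ} {a b : ℝ} (hg : ContinuousOn g (Icc a b))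
    (hab : a ≤ b) (ha : g a ≤ 0) : ∃ s ∈ Icc a b, g s ≤ 0 ∧ ∀ t ∈ Ioc s b, 0 < g t := by
  have hclosed : IsClosed (Icc a b ∩ g ⁻¹' Iic 0) :=
    hg.preimage_isClosed_of_isClosed isClosed_Icc isClosed_Iic
  obtain ⟨s, ⟨hs, hgs⟩, hmax⟩ :=
    (isCompact_Icc.of_isClosed_subset hclosed inter_subset_left).exists_isGreatest
      ⟨a, left_mem_Icc.2 hab, ha⟩
  refine ⟨s, hs, hgs, fun t ht => ?_⟩
  by_contra! hgt
  exact (hmax ⟨⟨hs.1.trans ht.1.le, ht.2⟩, hgt⟩).not_gt ht.1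

theorem stmt17_general (T : ℝ) (v : ℝ → ℝ → ℝ) (ζ ζs : ℝ → ℝ) (L : NNReal)
    (hζcont : ContinuousOn ζ (Set.Icc 0 T))
    (hζmono : MonotoneOn ζ (Set.Icc 0 T))
    (hζslip : LipschitzOnWith L ζs (Set.Icc 0 T))
    (h0 : ζs 0 = ζ 0)
    (hle : ∀ t ∈ Set.Icc (0:ℝ) T, ζ t ≤ ζs t)
    (hzero : ∀ t ∈ Set.Icc (0:ℝ) T, ∀ x, ζ t ≤ x → v x t = 0)
    (hgrowth : ∀ t₀ ∈ Set.Ioo (0:ℝ) T, ∀ d : ℝ, HasDerivAt ζs d t₀ → 0 < d →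
      ∃ δ₀ > (0:ℝ), ∃ c > (0:ℝ), ∀ δ : ℝ, 0 ≤ δ → δ ≤ δ₀ →
        c * δ ≤ v (ζs t₀ - δ) t₀) :
    ∀ t ∈ Set.Icc (0:ℝ) T, ζs t = ζ t := by
  intro t₁ ht₁
  by_contra hne
  have hsub : Icc 0 t₁ ⊆ Icc 0 T := Icc_subset_Icc_right ht₁.2
  obtain ⟨s, hs, hcontact, hgap⟩ :=
    ((hζslip.continuousOn.mono hsub).sub (hζcont.mono hsub)).exists_last_nonpos ht₁.1
      (by simp [h0])
  have hst₁ : s < t₁ := hs.2.lt_of_ne fun h => by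
    subst h; exact hne (le_antisymm (sub_nonpos.1 hcontact) (hle s ht₁))
  have hrise : ζs s < ζs t₁ := by
    have hs_le : ζs s ≤ ζ s := sub_nonpos.1 hcontact
    have hgap₁ : ζ t₁ < ζs t₁ := sub_pos.1 (hgap t₁ ⟨hst₁, le_rfl⟩)
    linarith [hζmono (hsub hs) ht₁ hs.2]
  have hlip : LipschitzOnWith L ζs (uIcc s t₁) := hζslip.mono <| by
    rw [uIcc_of_le hs.2]; exact (Icc_subset_Icc_left hs.1).trans hsub
  obtain ⟨t₀, ht₀, d, hd, hderiv⟩ :=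
    hlip.absolutelyContinuousOnInterval.exists_hasDerivAt_pos hs.2 hrise
  have ht₀T : t₀ ∈ Ioo 0 T := ⟨hs.1.trans_lt ht₀.1, ht₀.2.trans_le ht₁.2⟩
  have hgap₀ : ζ t₀ < ζs t₀ := sub_pos.1 (hgap t₀ ⟨ht₀.1, ht₀.2.le⟩)
  obtain ⟨δ₀, hδ₀, c, hc, hlin⟩ := hgrowth t₀ ht₀T d hderiv hd
  set δ := min δ₀ (ζs t₀ - ζ t₀)
  have hδ : 0 < δ := lt_min hδ₀ (sub_pos.2 hgap₀)
  have hv : v (ζs t₀ - δ) t₀ = 0 :=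
    hzero t₀ (Ioo_subset_Icc_self ht₀T) _ (by linarith [min_le_right δ₀ (ζs t₀ - ζ t₀)])
  have := hlin δ hδ.le (min_le_left _ _)
  rw [hv] at this
  linarith [mul_pos hc hδ]

/-- Identification of the limit of the numerical interfaces with the true
free boundary: if `ζ* ≥ ζ`, `ζ*(0) = ζ(0)`, `ζ*` is Lipschitz and
nondecreasing, `v` vanishes to the right of `ζ`, and whenever `ζ*` moves
with positive speed the pressure grows linearly behind `ζ*`, then
`ζ* = ζ` on `[0,T]`. -/
theorem stmt17 (T : ℝ) (hT : 0 < T) (v : ℝ → ℝ → ℝ) (ζ ζs : ℝ → ℝ) (L : NNReal)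
    (hvcont : Continuous fun p : ℝ × ℝ => v p.1 p.2)
    (hvnonneg : ∀ x t, 0 ≤ v x t)
    (hζcont : ContinuousOn ζ (Set.Icc 0 T))
    (hζmono : MonotoneOn ζ (Set.Icc 0 T))
    (hζscont : ContinuousOn ζs (Set.Icc 0 T))
    (hζsmono : MonotoneOn ζs (Set.Icc 0 T))
    (hζslip : LipschitzOnWith L ζs (Set.Icc 0 T))
    (h0 : ζs 0 = ζ 0)
    (hle : ∀ t ∈ Set.Icc (0:ℝ) T, ζ t ≤ ζs t)
    (hζdef : ∀ t ∈ Set.Icc (0:ℝ) T, IsLUB {x : ℝ | 0 < v x t} (ζ t))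
    (hzero : ∀ t ∈ Set.Icc (0:ℝ) T, ∀ x, ζ t ≤ x → v x t = 0)
    (hgrowth : ∀ t₀ ∈ Set.Ioo (0:ℝ) T, ∀ d : ℝ, HasDerivAt ζs d t₀ → 0 < d →
      ∃ δ₀ > (0:ℝ), ∃ c > (0:ℝ), ∀ δ : ℝ, 0 ≤ δ → δ ≤ δ₀ →
        c * δ ≤ v (ζs t₀ - δ) t₀) :
    ∀ t ∈ Set.Icc (0:ℝ) T, ζs t = ζ t :=
  stmt17_general T v ζ ζs L hζcont hζmono hζslip h0 hle hzero hgrowth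
end
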